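/- Renaming preserves concurrency: suppose ρ : Fin Γ → Fin Δ is a renaming and E, E' are coinitial transitions from a process Γ ⊢ P with χ : E ⌣ E'. Then the renamed transitions are concurrent: E/ρ ⌣ E'/ρ. -/

import Mathlib

/-- Contexts are natural numbers; names in context `Γ` are de Bruijn indices below `Γ`. -/
abbrev Name (Γ : ℕ) : Type := Fin Γ

/-- The renaming `push : Fin Γ → Fin (Γ+1)` sends `x` to `x+1`, freeing the index `0`. -/
def push {Γ : ℕ} (x : Name Γ) : Name (Γ + 1) := x.succ

/-- For `y : Fin Γ`, the renaming `pop y : Fin (Γ+1) → Fin Γ` sends `0` to `y` and `x+1` to `x`. -/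
def pop {Γ : ℕ} (y : Name Γ) : Name (Γ + 1) → Name Γ
  | ⟨0, _⟩ => y
  | ⟨x + 1, h⟩ => ⟨x, Nat.lt_of_succ_lt_succ h⟩

/-- The renaming `swap : Fin (Γ+2) → Fin (Γ+2)` sends `0` to `1`, `1` to `0` and `x+2` to itself. -/
def swap {Γ : ℕ} : Name (Γ + 2) → Name (Γ + 2)
  | ⟨0, _⟩ => ⟨1, by omega⟩
  | ⟨1, _⟩ => ⟨0, by omega⟩
  | ⟨x + 2, h⟩ => ⟨x + 2, h⟩

/-- The lift `suc ρ : Fin (Γ+1) → Fin (Δ+1)` of a renaming `ρ : Fin Γ → Fin Δ` sends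
`0` to `0` and `x+1` to `(ρ x)+1`. -/
def sucR {Γ Δ : ℕ} (ρ : Name Γ → Name Δ) : Name (Γ + 1) → Name (Δ + 1)
  | ⟨0, _⟩ => ⟨0, Nat.succ_pos Δ⟩
  | ⟨x + 1, h⟩ => (ρ ⟨x, Nat.lt_of_succ_lt_succ h⟩).succ

-- defeq tests
/-- Processes over the context `Γ`, in de Bruijn form. -/
inductive Proc : ℕ → Type where
  /-- The inactive process `0`. -/
  | nil : {Γ : ℕ} → Proc Γ
  /-- Input prefix `x.P` (binding one name). -/
  | input : {Γ : ℕ} → Name Γ → Proc (Γ + 1) → Proc Γ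
  /-- Output prefix `x⟨y⟩.P`. -/
  | output : {Γ : ℕ} → Name Γ → Name Γ → Proc Γ → Proc Γ
  /-- Choice `P + Q`. -/
  | choice : {Γ : ℕ} → Proc Γ → Proc Γ → Proc Γ
  /-- Parallel composition `P ∣ Q`. -/
  | par : {Γ : ℕ} → Proc Γ → Proc Γ → Proc Γ
  /-- Restriction `ν P` (binding one name). -/
  | nu : {Γ : ℕ} → Proc (Γ + 1) → Proc Γ
  /-- Replication `!P`. -/
  | rep : {Γ : ℕ} → Proc Γ → Proc Γ

/-- The functorial extension of a renaming to processes, going under the binders of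
input and restriction via the lift `sucR`. -/
def Proc.rename : {Γ Δ : ℕ} → (Name Γ → Name Δ) → Proc Γ → Proc Δ
  | _, _, _, .nil => .nil
  | _, _, ρ, .input x P => .input (ρ x) (P.rename (sucR ρ))
  | _, _, ρ, .output x y P => .output (ρ x) (ρ y) (P.rename ρ)
  | _, _, ρ, .choice P Q => .choice (P.rename ρ) (Q.rename ρ)
  | _, _, ρ, .par P Q => .par (P.rename ρ) (Q.rename ρ)
  | _, _, ρ, .nu P => .nu (P.rename (sucR ρ))
  | _, _, ρ, .rep P => .rep (P.rename ρ)
/-- Actions are either *bound* (input and bound output, whose target context gains a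
fresh name) or *non-bound* (output and silent, whose target context is unchanged). -/
inductive ActTy : Type where
  | bound : ActTy
  | nonbound : ActTy

/-- The target context of an action of the given kind performed in context `Γ`. -/
def ActTy.tgt : ActTy → ℕ → ℕ
  | .bound, Γ => Γ + 1
  | .nonbound, Γ => Γ

attribute [reducible] ActTy.tgt

/-- Actions over the context `Γ`. -/
inductive Act : ActTy → ℕ → Type where
  /-- Input `x`. -/
  | inp : {Γ : ℕ} → Name Γ → Act .bound Γ
  /-- Bound output `x⟨ν⟩` (output of a name whose scope is being extruded). -/
  | bout : {Γ : ℕ} → Name Γ → Act .bound Γ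
  /-- Output `x⟨y⟩`. -/
  | out : {Γ : ℕ} → Name Γ → Name Γ → Act .nonbound Γ
  /-- Silent action `τ`. -/
  | tau : {Γ : ℕ} → Act .nonbound Γ

/-- The extension of a renaming to actions. -/
def Act.rename {Γ Δ : ℕ} (ρ : Name Γ → Name Δ) : {ty : ActTy} → Act ty Γ → Act ty Δ
  | _, .inp x => .inp (ρ x)
  | _, .bout x => .bout (ρ x)
  | _, .out x y => .out (ρ x) (ρ y)
  | _, .tau => .tau

/-- The residual `ρ/a` of a renaming `ρ` after an action of kind `ty`:
`suc ρ` if the action is bound and `ρ` itself otherwise. -/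
def resRen : (ty : ActTy) → {Γ Δ : ℕ} → (Name Γ → Name Δ) → Name (ty.tgt Γ) → Name (ty.tgt Δ)
  | .bound, _, _, ρ => sucR ρ
  | .nonbound, _, _, ρ => ρ
/-- The labelled transition relation, in proof-relevant form: an element of
`Tr P a R` is a derivation (a "proved transition") of `P ⟶a R`. -/
inductive Tr : {Γ : ℕ} → {ty : ActTy} → Proc Γ → Act ty Γ → Proc (ActTy.tgt ty Γ) → Type where
  /-- `x.P  ⟶x  P`. -/
  | inp : {Γ : ℕ} → (x : Name Γ) → (P : Proc (Γ + 1)) →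
      Tr (.input x P) (.inp x) P
  /-- `x⟨y⟩.P  ⟶x⟨y⟩  P`. -/
  | out : {Γ : ℕ} → (x y : Name Γ) → (P : Proc Γ) →
      Tr (.output x y P) (.out x y) P
  /-- Choose the left branch. -/
  | sumL : {Γ : ℕ} → {ty : ActTy} → {P : Proc Γ} → (Q : Proc Γ) → {a : Act ty Γ} →
      {R : Proc (ActTy.tgt ty Γ)} → Tr P a R → Tr (.choice P Q) a R
  /-- Choose the right branch. -/
  | sumR : {Γ : ℕ} → {ty : ActTy} → (P : Proc Γ) → {Q : Proc Γ} → {a : Act ty Γ} →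
      {R : Proc (ActTy.tgt ty Γ)} → Tr Q a R → Tr (.choice P Q) a R
  /-- Propagate a non-bound action through a parallel composition on the left. -/
  | parLC : {Γ : ℕ} → {P : Proc Γ} → (Q : Proc Γ) → {c : Act .nonbound Γ} → {R : Proc Γ} →
      Tr P c R → Tr (.par P Q) c (.par R Q)
  /-- Propagate a bound action through a parallel composition on the left,
  reserving the fresh name `0` in the passive component via `push`. -/
  | parLB : {Γ : ℕ} → {P : Proc Γ} → (Q : Proc Γ) → {b : Act .bound Γ} → {R : Proc (Γ + 1)} →
      Tr P b R → Tr (.par P Q) b (.par R (Q.rename push))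
  /-- Propagate a non-bound action through a parallel composition on the right. -/
  | parRC : {Γ : ℕ} → (P : Proc Γ) → {Q : Proc Γ} → {c : Act .nonbound Γ} → {S : Proc Γ} →
      Tr Q c S → Tr (.par P Q) c (.par P S)
  /-- Propagate a bound action through a parallel composition on the right. -/
  | parRB : {Γ : ℕ} → (P : Proc Γ) → {Q : Proc Γ} → {b : Act .bound Γ} → {S : Proc (Γ + 1)} →
      Tr Q b S → Tr (.par P Q) b (.par (P.rename push) S)
  /-- Communication rendezvous, receiving `y` on the left. -/
  | comL : {Γ : ℕ} → {P Q : Proc Γ} → {x y : Name Γ} → {R : Proc (Γ + 1)} → {S : Proc Γ} →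
      Tr P (.inp x) R → Tr Q (.out x y) S →
      Tr (.par P Q) .tau (.par (R.rename (pop y)) S)
  /-- Communication rendezvous, receiving `y` on the right. -/
  | comR : {Γ : ℕ} → {P Q : Proc Γ} → {x y : Name Γ} → {R : Proc Γ} → {S : Proc (Γ + 1)} →
      Tr P (.out x y) R → Tr Q (.inp x) S →
      Tr (.par P Q) .tau (.par R (S.rename (pop y)))
  /-- Initiate extrusion of the scope of a `ν`-binder: an output `(x+1)⟨0⟩` under the
  binder becomes a bound output `x⟨ν⟩`. -/
  | extrude : {Γ : ℕ} → {P : Proc (Γ + 1)} → {x : Name Γ} → {R : Proc (Γ + 1)} →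
      Tr P (.out (push x) 0) R → Tr (.nu P) (.bout x) R
  /-- Extrusion rendezvous ("close"), receiving the extruded name `0` on the left. -/
  | closeL : {Γ : ℕ} → {P Q : Proc Γ} → {x : Name Γ} → {R S : Proc (Γ + 1)} →
      Tr P (.inp x) R → Tr Q (.bout x) S →
      Tr (.par P Q) .tau (.nu (.par R S))
  /-- Extrusion rendezvous ("close"), receiving the extruded name `0` on the right. -/
  | closeR : {Γ : ℕ} → {P Q : Proc Γ} → {x : Name Γ} → {R S : Proc (Γ + 1)} →
      Tr P (.bout x) R → Tr Q (.inp x) S →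
      Tr (.par P Q) .tau (.nu (.par R S))
  /-- Propagate a non-bound action of the form `push* c` through a `ν`-binder. -/
  | nuC : {Γ : ℕ} → {P : Proc (Γ + 1)} → {c : Act .nonbound Γ} → {R : Proc (Γ + 1)} →
      Tr P (c.rename push) R → Tr (.nu P) c (.nu R)
  /-- Propagate a bound action of the form `push* b` through a `ν`-binder,
  rewiring the target with the braid `swap`. -/
  | nuB : {Γ : ℕ} → {P : Proc (Γ + 1)} → {b : Act .bound Γ} → {R : Proc (Γ + 2)} →
      Tr P (b.rename push) R → Tr (.nu P) b (.nu (R.rename swap))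
  /-- Replication. -/
  | rep : {Γ : ℕ} → {ty : ActTy} → {P : Proc Γ} → {a : Act ty Γ} → {R : Proc (ActTy.tgt ty Γ)} →
      Tr (.par P (.rep P)) a R → Tr (.rep P) a R
theorem sucR_comp {Γ Δ Θ : ℕ} (ρ : Name Γ → Name Δ) (σ : Name Δ → Name Θ) :
    sucR (σ ∘ ρ) = sucR σ ∘ sucR ρ := by
  funext x; rcases x with ⟨(_ | v), h⟩ <;> rfl

theorem rename_rename : ∀ {Γ Δ Θ : ℕ} (ρ : Name Γ → Name Δ) (σ : Name Δ → Name Θ)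
    (P : Proc Γ), (P.rename ρ).rename σ = P.rename (σ ∘ ρ)
  | _, _, _, _, _, .nil => rfl
  | _, _, _, ρ, σ, .input x P => by
      simp only [Proc.rename, rename_rename, sucR_comp, Function.comp_apply]
  | _, _, _, ρ, σ, .output x y P => by
      simp only [Proc.rename, rename_rename, Function.comp_apply]
  | _, _, _, ρ, σ, .choice P Q => by
      simp only [Proc.rename, rename_rename]
  | _, _, _, ρ, σ, .par P Q => by
      simp only [Proc.rename, rename_rename]
  | _, _, _, ρ, σ, .nu P => by
      simp only [Proc.rename, rename_rename, sucR_comp]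
  | _, _, _, ρ, σ, .rep P => by
      simp only [Proc.rename, rename_rename]

theorem sucR_id {Γ : ℕ} : sucR (id : Name Γ → Name Γ) = id := by
  funext x; rcases x with ⟨(_ | v), h⟩ <;> rfl

theorem rename_id : ∀ {Γ : ℕ} (P : Proc Γ), P.rename (id : Name Γ → Name Γ) = P
  | _, .nil => rfl
  | _, .input x P => by simp only [Proc.rename, sucR_id, rename_id, id_eq]
  | _, .output x y P => by simp only [Proc.rename, rename_id, id_eq]
  | _, .choice P Q => by simp only [Proc.rename, rename_id]
  | _, .par P Q => by simp only [Proc.rename, rename_id]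
  | _, .nu P => by simp only [Proc.rename, sucR_id, rename_id]
  | _, .rep P => by simp only [Proc.rename, rename_id]

theorem ren_push_suc {Γ Δ : ℕ} (ρ : Name Γ → Name Δ) (Q : Proc Γ) :
    (Q.rename push).rename (sucR ρ) = (Q.rename ρ).rename push := by
  rw [rename_rename, rename_rename]
  have h : (sucR ρ ∘ push : Name Γ → Name (Δ + 1)) = push ∘ ρ := by funext x; rfl
  rw [h]

theorem ren_pop_comm {Γ Δ : ℕ} (ρ : Name Γ → Name Δ) (y : Name Γ) (R : Proc (Γ + 1)) :
    (R.rename (pop y)).rename ρ = (R.rename (sucR ρ)).rename (pop (ρ y)) := by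
  rw [rename_rename, rename_rename]
  have h : (ρ ∘ pop y : Name (Γ + 1) → Name Δ) = pop (ρ y) ∘ sucR ρ := by
    funext x; rcases x with ⟨(_ | v), h⟩ <;> rfl
  rw [h]

theorem ren_swap_comm {Γ Δ : ℕ} (ρ : Name Γ → Name Δ) (R : Proc (Γ + 2)) :
    (R.rename (sucR (sucR ρ))).rename swap = (R.rename swap).rename (sucR (sucR ρ)) := by
  rw [rename_rename, rename_rename]
  have h : (swap ∘ sucR (sucR ρ) : Name (Γ + 2) → Name (Δ + 2)) = sucR (sucR ρ) ∘ swap := by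
    funext x; rcases x with ⟨(_ | _ | v), h⟩ <;> rfl
  rw [h]

theorem act_push_suc {Γ Δ : ℕ} (ρ : Name Γ → Name Δ) {ty : ActTy} (a : Act ty Γ) :
    (a.rename push).rename (sucR ρ) = (a.rename ρ).rename push := by
  cases a <;> rfl

theorem act_swap_pp {Γ : ℕ} {ty : ActTy} (a : Act ty Γ) :
    ((a.rename push).rename push).rename swap = (a.rename push).rename push := by
  cases a <;> rfl

theorem swap_swap {Γ : ℕ} (P : Proc (Γ + 2)) : (P.rename swap).rename swap = P := by
  rw [rename_rename]
  have h : (swap ∘ swap : Name (Γ + 2) → Name (Γ + 2)) = id := by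
    funext x; rcases x with ⟨(_ | _ | v), h⟩ <;> rfl
  rw [h, rename_id]

/-- Transport a transition along an equality of actions. -/
def Tr.castA {Γ : ℕ} {ty : ActTy} {P : Proc Γ} {a a' : Act ty Γ} {R : Proc (ActTy.tgt ty Γ)}
    (h : a = a') (E : Tr P a R) : Tr P a' R := h ▸ E

/-- Transport a transition along an equality of source processes. -/
def Tr.castS {Γ : ℕ} {ty : ActTy} {P P' : Proc Γ} {a : Act ty Γ} {R : Proc (ActTy.tgt ty Γ)}
    (h : P = P') (E : Tr P a R) : Tr P' a R := h ▸ E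

/-- Transport a transition along an equality of target processes. -/
def Tr.castT {Γ : ℕ} {ty : ActTy} {P : Proc Γ} {a : Act ty Γ} {R R' : Proc (ActTy.tgt ty Γ)}
    (h : R = R') (E : Tr P a R) : Tr P a R' := h ▸ E
/-- The residual `E/ρ` of a transition after a renaming: transitions are stable under
renaming, with `E/ρ : ρ* P ⟶(ρ* a) (ρ/a)* Q` obtained by lifting `ρ` through the
derivation `E : P ⟶a Q`. -/
def renameTr : {Γ Δ : ℕ} → {ty : ActTy} → {P : Proc Γ} → {a : Act ty Γ} →
    {Q : Proc (ActTy.tgt ty Γ)} → (ρ : Name Γ → Name Δ) → Tr P a Q →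
    Tr (P.rename ρ) (a.rename ρ) (Q.rename (resRen ty ρ))
  | _, _, _, _, _, _, ρ, .inp x P => .inp (ρ x) (P.rename (sucR ρ))
  | _, _, _, _, _, _, ρ, .out x y P => .out (ρ x) (ρ y) (P.rename ρ)
  | _, _, _, _, _, _, ρ, .sumL Q E => .sumL (Q.rename ρ) (renameTr ρ E)
  | _, _, _, _, _, _, ρ, .sumR P E => .sumR (P.rename ρ) (renameTr ρ E)
  | _, _, _, _, _, _, ρ, .parLC Q E => .parLC (Q.rename ρ) (renameTr ρ E)
  | _, _, _, _, _, _, ρ, .parLB Q E =>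
      Tr.castT (by simp only [resRen, Proc.rename]; rw [ren_push_suc]) (.parLB (Q.rename ρ) (renameTr ρ E))
  | _, _, _, _, _, _, ρ, .parRC P E => .parRC (P.rename ρ) (renameTr ρ E)
  | _, _, _, _, _, _, ρ, .parRB P E =>
      Tr.castT (by simp only [resRen, Proc.rename]; rw [ren_push_suc]) (.parRB (P.rename ρ) (renameTr ρ E))
  | _, _, _, _, _, _, ρ, .comL E F =>
      Tr.castT (by simp only [resRen, Proc.rename]; rw [ren_pop_comm]) (.comL (renameTr ρ E) (renameTr ρ F))
  | _, _, _, _, _, _, ρ, .comR E F =>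
      Tr.castT (by simp only [resRen, Proc.rename]; rw [ren_pop_comm]) (.comR (renameTr ρ E) (renameTr ρ F))
  | _, _, _, _, _, _, ρ, .extrude E => .extrude (renameTr (sucR ρ) E)
  | _, _, _, _, _, _, ρ, .closeL E F => .closeL (renameTr ρ E) (renameTr ρ F)
  | _, _, _, _, _, _, ρ, .closeR E F => .closeR (renameTr ρ E) (renameTr ρ F)
  | _, _, _, _, _, _, ρ, .nuC (c := c) E =>
      .nuC (Tr.castA (act_push_suc ρ c) (renameTr (sucR ρ) E))
  | _, _, _, _, _, _, ρ, .nuB (b := b) E =>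
      Tr.castT (by simp only [resRen, Proc.rename]; rw [ren_swap_comm]) (.nuB (Tr.castA (act_push_suc ρ b) (renameTr (sucR ρ) E)))
  | _, _, _, _, _, _, ρ, .rep E => .rep (renameTr ρ E)
/-- The concurrency relation `E ⌣ E'` on coinitial transitions: the symmetric closure of
the rules of Figure 2 of the paper.  Transitions on opposite sides of a parallel
composition are concurrent, and concurrency propagates through choice, parallel
composition, communication and close rendezvous, restriction, extrusion and
replication. -/
inductive Conc : {Γ : ℕ} → {ty ty' : ActTy} → {P : Proc Γ} → {a : Act ty Γ} →
    {R : Proc (ActTy.tgt ty Γ)} → {a' : Act ty' Γ} → {R' : Proc (ActTy.tgt ty' Γ)} →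
    Tr P a R → Tr P a' R' → Prop where
  -- transitions on opposite sides of the same parallel composition
  | parR_parL_cc : {Γ : ℕ} → {P Q : Proc Γ} → {c : Act .nonbound Γ} → {S : Proc Γ}
      → {c' : Act .nonbound Γ} → {R : Proc Γ} → (F : Tr Q c S) → (E : Tr P c' R)
      → Conc (Tr.parRC P F) (Tr.parLC Q E)
  | parR_parL_cb : {Γ : ℕ} → {P Q : Proc Γ} → {c : Act .nonbound Γ} → {S : Proc Γ}
      → {b' : Act .bound Γ} → {R : Proc (Γ + 1)} → (F : Tr Q c S) → (E : Tr P b' R)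
      → Conc (Tr.parRC P F) (Tr.parLB Q E)
  | parR_parL_bc : {Γ : ℕ} → {P Q : Proc Γ} → {b : Act .bound Γ} → {S : Proc (Γ + 1)}
      → {c' : Act .nonbound Γ} → {R : Proc Γ} → (F : Tr Q b S) → (E : Tr P c' R)
      → Conc (Tr.parRB P F) (Tr.parLC Q E)
  | parR_parL_bb : {Γ : ℕ} → {P Q : Proc Γ} → {b : Act .bound Γ} → {S : Proc (Γ + 1)}
      → {b' : Act .bound Γ} → {R : Proc (Γ + 1)} → (F : Tr Q b S) → (E : Tr P b' R)
      → Conc (Tr.parRB P F) (Tr.parLB Q E)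
  -- a transition on the left of a parallel composition, concurrent with a rendezvous
  | parLC_comL : {Γ : ℕ} → {P Q : Proc Γ} → {c : Act .nonbound Γ} → {R : Proc Γ}
      → {x y : Name Γ} → {R' : Proc (Γ + 1)} → {S : Proc Γ}
      → (E : Tr P c R) → (E' : Tr P (.inp x) R') → (F : Tr Q (.out x y) S)
      → Conc E E' → Conc (Tr.parLC Q E) (Tr.comL E' F)
  | parLB_comL : {Γ : ℕ} → {P Q : Proc Γ} → {b : Act .bound Γ} → {R : Proc (Γ + 1)}
      → {x y : Name Γ} → {R' : Proc (Γ + 1)} → {S : Proc Γ}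
      → (E : Tr P b R) → (E' : Tr P (.inp x) R') → (F : Tr Q (.out x y) S)
      → Conc E E' → Conc (Tr.parLB Q E) (Tr.comL E' F)
  | parLC_comR : {Γ : ℕ} → {P Q : Proc Γ} → {c : Act .nonbound Γ} → {R : Proc Γ}
      → {x y : Name Γ} → {R' : Proc Γ} → {S : Proc (Γ + 1)}
      → (E : Tr P c R) → (E' : Tr P (.out x y) R') → (F : Tr Q (.inp x) S)
      → Conc E E' → Conc (Tr.parLC Q E) (Tr.comR E' F)
  | parLB_comR : {Γ : ℕ} → {P Q : Proc Γ} → {b : Act .bound Γ} → {R : Proc (Γ + 1)}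
      → {x y : Name Γ} → {R' : Proc Γ} → {S : Proc (Γ + 1)}
      → (E : Tr P b R) → (E' : Tr P (.out x y) R') → (F : Tr Q (.inp x) S)
      → Conc E E' → Conc (Tr.parLB Q E) (Tr.comR E' F)
  | parRC_comL : {Γ : ℕ} → {P Q : Proc Γ} → {c : Act .nonbound Γ} → {S : Proc Γ}
      → {x y : Name Γ} → {R : Proc (Γ + 1)} → {S' : Proc Γ}
      → (F : Tr Q c S) → (E : Tr P (.inp x) R) → (F' : Tr Q (.out x y) S')
      → Conc F F' → Conc (Tr.parRC P F) (Tr.comL E F')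
  | parRB_comL : {Γ : ℕ} → {P Q : Proc Γ} → {b : Act .bound Γ} → {S : Proc (Γ + 1)}
      → {x y : Name Γ} → {R : Proc (Γ + 1)} → {S' : Proc Γ}
      → (F : Tr Q b S) → (E : Tr P (.inp x) R) → (F' : Tr Q (.out x y) S')
      → Conc F F' → Conc (Tr.parRB P F) (Tr.comL E F')
  | parRC_comR : {Γ : ℕ} → {P Q : Proc Γ} → {c : Act .nonbound Γ} → {S : Proc Γ}
      → {x y : Name Γ} → {R : Proc Γ} → {S' : Proc (Γ + 1)}
      → (F : Tr Q c S) → (E : Tr P (.out x y) R) → (F' : Tr Q (.inp x) S')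
      → Conc F F' → Conc (Tr.parRC P F) (Tr.comR E F')
  | parRB_comR : {Γ : ℕ} → {P Q : Proc Γ} → {b : Act .bound Γ} → {S : Proc (Γ + 1)}
      → {x y : Name Γ} → {R : Proc Γ} → {S' : Proc (Γ + 1)}
      → (F : Tr Q b S) → (E : Tr P (.out x y) R) → (F' : Tr Q (.inp x) S')
      → Conc F F' → Conc (Tr.parRB P F) (Tr.comR E F')
  -- a transition on one side of a parallel composition, concurrent with a close rendezvous
  | parLC_closeL : {Γ : ℕ} → {P Q : Proc Γ} → {c : Act .nonbound Γ} → {R : Proc Γ}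
      → {x : Name Γ} → {R' S : Proc (Γ + 1)}
      → (E : Tr P c R) → (E' : Tr P (.inp x) R') → (F : Tr Q (.bout x) S)
      → Conc E E' → Conc (Tr.parLC Q E) (Tr.closeL E' F)
  | parLB_closeL : {Γ : ℕ} → {P Q : Proc Γ} → {b : Act .bound Γ} → {R : Proc (Γ + 1)}
      → {x : Name Γ} → {R' S : Proc (Γ + 1)}
      → (E : Tr P b R) → (E' : Tr P (.inp x) R') → (F : Tr Q (.bout x) S)
      → Conc E E' → Conc (Tr.parLB Q E) (Tr.closeL E' F)
  | parLC_closeR : {Γ : ℕ} → {P Q : Proc Γ} → {c : Act .nonbound Γ} → {R : Proc Γ}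
      → {x : Name Γ} → {R' S : Proc (Γ + 1)}
      → (E : Tr P c R) → (E' : Tr P (.bout x) R') → (F : Tr Q (.inp x) S)
      → Conc E E' → Conc (Tr.parLC Q E) (Tr.closeR E' F)
  | parLB_closeR : {Γ : ℕ} → {P Q : Proc Γ} → {b : Act .bound Γ} → {R : Proc (Γ + 1)}
      → {x : Name Γ} → {R' S : Proc (Γ + 1)}
      → (E : Tr P b R) → (E' : Tr P (.bout x) R') → (F : Tr Q (.inp x) S)
      → Conc E E' → Conc (Tr.parLB Q E) (Tr.closeR E' F)
  | parRC_closeL : {Γ : ℕ} → {P Q : Proc Γ} → {c : Act .nonbound Γ} → {S : Proc Γ}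
      → {x : Name Γ} → {R S' : Proc (Γ + 1)}
      → (F : Tr Q c S) → (E : Tr P (.inp x) R) → (F' : Tr Q (.bout x) S')
      → Conc F F' → Conc (Tr.parRC P F) (Tr.closeL E F')
  | parRB_closeL : {Γ : ℕ} → {P Q : Proc Γ} → {b : Act .bound Γ} → {S : Proc (Γ + 1)}
      → {x : Name Γ} → {R S' : Proc (Γ + 1)}
      → (F : Tr Q b S) → (E : Tr P (.inp x) R) → (F' : Tr Q (.bout x) S')
      → Conc F F' → Conc (Tr.parRB P F) (Tr.closeL E F')
  | parRC_closeR : {Γ : ℕ} → {P Q : Proc Γ} → {c : Act .nonbound Γ} → {S : Proc Γ}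
      → {x : Name Γ} → {R S' : Proc (Γ + 1)}
      → (F : Tr Q c S) → (E : Tr P (.bout x) R) → (F' : Tr Q (.inp x) S')
      → Conc F F' → Conc (Tr.parRC P F) (Tr.closeR E F')
  | parRB_closeR : {Γ : ℕ} → {P Q : Proc Γ} → {b : Act .bound Γ} → {S : Proc (Γ + 1)}
      → {x : Name Γ} → {R S' : Proc (Γ + 1)}
      → (F : Tr Q b S) → (E : Tr P (.bout x) R) → (F' : Tr Q (.inp x) S')
      → Conc F F' → Conc (Tr.parRB P F) (Tr.closeR E F')
  -- choice
  | sumL_sumL : {Γ : ℕ} → {ty ty' : ActTy} → {P Q : Proc Γ} → {a : Act ty Γ}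
      → {R : Proc (ActTy.tgt ty Γ)} → {a' : Act ty' Γ} → {R' : Proc (ActTy.tgt ty' Γ)}
      → (E : Tr P a R) → (E' : Tr P a' R')
      → Conc E E' → Conc (Tr.sumL Q E) (Tr.sumL Q E')
  | sumR_sumR : {Γ : ℕ} → {ty ty' : ActTy} → {P Q : Proc Γ} → {a : Act ty Γ}
      → {S : Proc (ActTy.tgt ty Γ)} → {a' : Act ty' Γ} → {S' : Proc (ActTy.tgt ty' Γ)}
      → (F : Tr Q a S) → (F' : Tr Q a' S')
      → Conc F F' → Conc (Tr.sumR P F) (Tr.sumR P F')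
  -- concurrent transitions on the same side of a parallel composition
  | parL_parL_cc : {Γ : ℕ} → {P Q : Proc Γ} → {c : Act .nonbound Γ} → {R : Proc Γ}
      → {c' : Act .nonbound Γ} → {R' : Proc Γ} → (E : Tr P c R) → (E' : Tr P c' R')
      → Conc E E' → Conc (Tr.parLC Q E) (Tr.parLC Q E')
  | parL_parL_cb : {Γ : ℕ} → {P Q : Proc Γ} → {c : Act .nonbound Γ} → {R : Proc Γ}
      → {b' : Act .bound Γ} → {R' : Proc (Γ + 1)} → (E : Tr P c R) → (E' : Tr P b' R')
      → Conc E E' → Conc (Tr.parLC Q E) (Tr.parLB Q E')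
  | parL_parL_bc : {Γ : ℕ} → {P Q : Proc Γ} → {b : Act .bound Γ} → {R : Proc (Γ + 1)}
      → {c' : Act .nonbound Γ} → {R' : Proc Γ} → (E : Tr P b R) → (E' : Tr P c' R')
      → Conc E E' → Conc (Tr.parLB Q E) (Tr.parLC Q E')
  | parL_parL_bb : {Γ : ℕ} → {P Q : Proc Γ} → {b : Act .bound Γ} → {R : Proc (Γ + 1)}
      → {b' : Act .bound Γ} → {R' : Proc (Γ + 1)} → (E : Tr P b R) → (E' : Tr P b' R')
      → Conc E E' → Conc (Tr.parLB Q E) (Tr.parLB Q E')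
  | parR_parR_cc : {Γ : ℕ} → {P Q : Proc Γ} → {c : Act .nonbound Γ} → {S : Proc Γ}
      → {c' : Act .nonbound Γ} → {S' : Proc Γ} → (F : Tr Q c S) → (F' : Tr Q c' S')
      → Conc F F' → Conc (Tr.parRC P F) (Tr.parRC P F')
  | parR_parR_cb : {Γ : ℕ} → {P Q : Proc Γ} → {c : Act .nonbound Γ} → {S : Proc Γ}
      → {b' : Act .bound Γ} → {S' : Proc (Γ + 1)} → (F : Tr Q c S) → (F' : Tr Q b' S')
      → Conc F F' → Conc (Tr.parRC P F) (Tr.parRB P F')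
  | parR_parR_bc : {Γ : ℕ} → {P Q : Proc Γ} → {b : Act .bound Γ} → {S : Proc (Γ + 1)}
      → {c' : Act .nonbound Γ} → {S' : Proc Γ} → (F : Tr Q b S) → (F' : Tr Q c' S')
      → Conc F F' → Conc (Tr.parRB P F) (Tr.parRC P F')
  | parR_parR_bb : {Γ : ℕ} → {P Q : Proc Γ} → {b : Act .bound Γ} → {S : Proc (Γ + 1)}
      → {b' : Act .bound Γ} → {S' : Proc (Γ + 1)} → (F : Tr Q b S) → (F' : Tr Q b' S')
      → Conc F F' → Conc (Tr.parRB P F) (Tr.parRB P F')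
  -- two rendezvous under the same parallel composition
  | comL_comL : {Γ : ℕ} → {P Q : Proc Γ} → {x y x' z : Name Γ}
      → {R R' : Proc (Γ + 1)} → {S S' : Proc Γ}
      → (E : Tr P (.inp x) R) → (F : Tr Q (.out x y) S)
      → (E' : Tr P (.inp x') R') → (F' : Tr Q (.out x' z) S')
      → Conc E E' → Conc F F' → Conc (Tr.comL E F) (Tr.comL E' F')
  | comR_comR : {Γ : ℕ} → {P Q : Proc Γ} → {x y x' z : Name Γ}
      → {R R' : Proc Γ} → {S S' : Proc (Γ + 1)}
      → (E : Tr P (.out x y) R) → (F : Tr Q (.inp x) S)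
      → (E' : Tr P (.out x' z) R') → (F' : Tr Q (.inp x') S')
      → Conc E E' → Conc F F' → Conc (Tr.comR E F) (Tr.comR E' F')
  | comL_comR : {Γ : ℕ} → {P Q : Proc Γ} → {x y x' z : Name Γ}
      → {R : Proc (Γ + 1)} → {R' : Proc Γ} → {S : Proc Γ} → {S' : Proc (Γ + 1)}
      → (E : Tr P (.inp x) R) → (F : Tr Q (.out x y) S)
      → (E' : Tr P (.out x' z) R') → (F' : Tr Q (.inp x') S')
      → Conc E E' → Conc F F' → Conc (Tr.comL E F) (Tr.comR E' F')
  | closeL_closeL : {Γ : ℕ} → {P Q : Proc Γ} → {x x' : Name Γ}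
      → {R S R' S' : Proc (Γ + 1)}
      → (E : Tr P (.inp x) R) → (F : Tr Q (.bout x) S)
      → (E' : Tr P (.inp x') R') → (F' : Tr Q (.bout x') S')
      → Conc E E' → Conc F F' → Conc (Tr.closeL E F) (Tr.closeL E' F')
  | closeR_closeR : {Γ : ℕ} → {P Q : Proc Γ} → {x x' : Name Γ}
      → {R S R' S' : Proc (Γ + 1)}
      → (E : Tr P (.bout x) R) → (F : Tr Q (.inp x) S)
      → (E' : Tr P (.bout x') R') → (F' : Tr Q (.inp x') S')
      → Conc E E' → Conc F F' → Conc (Tr.closeR E F) (Tr.closeR E' F')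
  | closeL_closeR : {Γ : ℕ} → {P Q : Proc Γ} → {x x' : Name Γ}
      → {R S R' S' : Proc (Γ + 1)}
      → (E : Tr P (.inp x) R) → (F : Tr Q (.bout x) S)
      → (E' : Tr P (.bout x') R') → (F' : Tr Q (.inp x') S')
      → Conc E E' → Conc F F' → Conc (Tr.closeL E F) (Tr.closeR E' F')
  -- a rendezvous concurrent with a close rendezvous
  | comL_closeL : {Γ : ℕ} → {P Q : Proc Γ} → {x y x' : Name Γ}
      → {R R' S' : Proc (Γ + 1)} → {S : Proc Γ}
      → (E : Tr P (.inp x) R) → (F : Tr Q (.out x y) S)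
      → (E' : Tr P (.inp x') R') → (F' : Tr Q (.bout x') S')
      → Conc E E' → Conc F F' → Conc (Tr.comL E F) (Tr.closeL E' F')
  | comL_closeR : {Γ : ℕ} → {P Q : Proc Γ} → {x y x' : Name Γ}
      → {R R' S' : Proc (Γ + 1)} → {S : Proc Γ}
      → (E : Tr P (.inp x) R) → (F : Tr Q (.out x y) S)
      → (E' : Tr P (.bout x') R') → (F' : Tr Q (.inp x') S')
      → Conc E E' → Conc F F' → Conc (Tr.comL E F) (Tr.closeR E' F')
  | comR_closeL : {Γ : ℕ} → {P Q : Proc Γ} → {x y x' : Name Γ}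
      → {R' S' : Proc (Γ + 1)} → {R : Proc Γ} → {S : Proc (Γ + 1)}
      → (E : Tr P (.out x y) R) → (F : Tr Q (.inp x) S)
      → (E' : Tr P (.inp x') R') → (F' : Tr Q (.bout x') S')
      → Conc E E' → Conc F F' → Conc (Tr.comR E F) (Tr.closeL E' F')
  | comR_closeR : {Γ : ℕ} → {P Q : Proc Γ} → {x y x' : Name Γ}
      → {R' S' : Proc (Γ + 1)} → {R : Proc Γ} → {S : Proc (Γ + 1)}
      → (E : Tr P (.out x y) R) → (F : Tr Q (.inp x) S)
      → (E' : Tr P (.bout x') R') → (F' : Tr Q (.inp x') S')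
      → Conc E E' → Conc F F' → Conc (Tr.comR E F) (Tr.closeR E' F')
  -- restriction and extrusion
  | extrude_extrude : {Γ : ℕ} → {P : Proc (Γ + 1)} → {x u : Name Γ} → {R R' : Proc (Γ + 1)}
      → (E : Tr P (.out (push x) 0) R) → (E' : Tr P (.out (push u) 0) R')
      → Conc E E' → Conc (Tr.extrude E) (Tr.extrude E')
  | extrude_nuC : {Γ : ℕ} → {P : Proc (Γ + 1)} → {x : Name Γ} → {R : Proc (Γ + 1)}
      → {c : Act .nonbound Γ} → {R' : Proc (Γ + 1)}
      → (E : Tr P (.out (push x) 0) R) → (E' : Tr P (c.rename push) R')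
      → Conc E E' → Conc (Tr.extrude E) (Tr.nuC E')
  | extrude_nuB : {Γ : ℕ} → {P : Proc (Γ + 1)} → {x : Name Γ} → {R : Proc (Γ + 1)}
      → {b : Act .bound Γ} → {R' : Proc (Γ + 2)}
      → (E : Tr P (.out (push x) 0) R) → (E' : Tr P (b.rename push) R')
      → Conc E E' → Conc (Tr.extrude E) (Tr.nuB E')
  | nu_nu_cc : {Γ : ℕ} → {P : Proc (Γ + 1)} → {c c' : Act .nonbound Γ} → {R R' : Proc (Γ + 1)}
      → (E : Tr P (c.rename push) R) → (E' : Tr P (c'.rename push) R')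
      → Conc E E' → Conc (Tr.nuC E) (Tr.nuC E')
  | nu_nu_cb : {Γ : ℕ} → {P : Proc (Γ + 1)} → {c : Act .nonbound Γ} → {b' : Act .bound Γ}
      → {R : Proc (Γ + 1)} → {R' : Proc (Γ + 2)}
      → (E : Tr P (c.rename push) R) → (E' : Tr P (b'.rename push) R')
      → Conc E E' → Conc (Tr.nuC E) (Tr.nuB E')
  | nu_nu_bc : {Γ : ℕ} → {P : Proc (Γ + 1)} → {b : Act .bound Γ} → {c' : Act .nonbound Γ}
      → {R : Proc (Γ + 2)} → {R' : Proc (Γ + 1)}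
      → (E : Tr P (b.rename push) R) → (E' : Tr P (c'.rename push) R')
      → Conc E E' → Conc (Tr.nuB E) (Tr.nuC E')
  | nu_nu_bb : {Γ : ℕ} → {P : Proc (Γ + 1)} → {b b' : Act .bound Γ} → {R R' : Proc (Γ + 2)}
      → (E : Tr P (b.rename push) R) → (E' : Tr P (b'.rename push) R')
      → Conc E E' → Conc (Tr.nuB E) (Tr.nuB E')
  -- replication
  | rep_rep : {Γ : ℕ} → {ty ty' : ActTy} → {P : Proc Γ} → {a : Act ty Γ}
      → {R : Proc (ActTy.tgt ty Γ)} → {a' : Act ty' Γ} → {R' : Proc (ActTy.tgt ty' Γ)}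
      → (E : Tr (.par P (.rep P)) a R) → (E' : Tr (.par P (.rep P)) a' R')
      → Conc E E' → Conc (Tr.rep E) (Tr.rep E')
  -- symmetry
  | symm : {Γ : ℕ} → {ty ty' : ActTy} → {P : Proc Γ} → {a : Act ty Γ}
      → {R : Proc (ActTy.tgt ty Γ)} → {a' : Act ty' Γ} → {R' : Proc (ActTy.tgt ty' Γ)}
      → {E : Tr P a R} → {E' : Tr P a' R'}
      → Conc E E' → Conc E' E

/-
Induction on `χ`. `renameTr ρ` maps each transition rule to itself, so each rule of `⌣` is
mapped to itself too, except that the renamed derivations come wrapped in transports: of their targets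
(renaming commutes with `push`, `pop y` and `swap` only propositionally) and, under `ν`, of
their actions. Concurrency is invariant under such transports.
-/

theorem Conc.castT_left {Γ : ℕ} {ty ty' : ActTy} {P : Proc Γ} {a : Act ty Γ}
    {R R'' : Proc (ActTy.tgt ty Γ)} {a' : Act ty' Γ} {S : Proc (ActTy.tgt ty' Γ)}
    {E : Tr P a R} {F : Tr P a' S} (h : R = R'') (χ : Conc E F) :
    Conc (E.castT h) F := by subst h; exact χ

theorem Conc.castT_right {Γ : ℕ} {ty ty' : ActTy} {P : Proc Γ} {a : Act ty Γ}
    {R : Proc (ActTy.tgt ty Γ)} {a' : Act ty' Γ} {S S'' : Proc (ActTy.tgt ty' Γ)}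
    {E : Tr P a R} {F : Tr P a' S} (h : S = S'') (χ : Conc E F) :
    Conc E (F.castT h) := by subst h; exact χ

theorem Conc.castA_left {Γ : ℕ} {ty ty' : ActTy} {P : Proc Γ} {a a'' : Act ty Γ}
    {R : Proc (ActTy.tgt ty Γ)} {a' : Act ty' Γ} {S : Proc (ActTy.tgt ty' Γ)}
    {E : Tr P a R} {F : Tr P a' S} (h : a = a'') (χ : Conc E F) :
    Conc (E.castA h) F := by subst h; exact χ

theorem Conc.castA_right {Γ : ℕ} {ty ty' : ActTy} {P : Proc Γ} {a : Act ty Γ}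
    {R : Proc (ActTy.tgt ty Γ)} {a' a'' : Act ty' Γ} {S : Proc (ActTy.tgt ty' Γ)}
    {E : Tr P a R} {F : Tr P a' S} (h : a' = a'') (χ : Conc E F) :
    Conc E (F.castA h) := by subst h; exact χ

/-- Renaming preserves concurrency: if `χ : E ⌣ E'` for coinitial transitions from
`Γ ⊢ P` and `ρ : Fin Γ → Fin Δ` is a renaming, then `E/ρ ⌣ E'/ρ`. -/
theorem Conc.rename_stable {Γ Δ : ℕ} (ρ : Name Γ → Name Δ) {ty ty' : ActTy} {P : Proc Γ}
    {a : Act ty Γ} {R : Proc (ActTy.tgt ty Γ)} {a' : Act ty' Γ} {R' : Proc (ActTy.tgt ty' Γ)}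
    {E : Tr P a R} {E' : Tr P a' R'} (χ : Conc E E') :
    Conc (renameTr ρ E) (renameTr ρ E') := by
  induction χ generalizing Δ with
  | symm _ ih => exact (ih ρ).symm
  | _ =>
    simp only [renameTr]
    repeat' first | apply Conc.castT_left | apply Conc.castT_right
    constructor <;> solve_by_elim [Conc.castA_left, Conc.castA_right]
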